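/- arXiv:1606.07474 — 2 statements merged into one kernel-verified Lean document; each statement's English description precedes it below -/
import Mathlib

section
/- If A is an n×n matrix over ℂ with |perm(A)| = ‖A‖₂ⁿ and ‖A‖₂ = 1, then A has exactly n nonzero entries, each of modulus 1, no two in the same row or column; equivalently, A is a permutation matrix times a unitary diagonal matrix. -/
open MeasureTheory

/-- The permanent of a complex square matrix. -/
noncomputable def perm {n : ℕ} (A : Matrix (Fin n) (Fin n) ℂ) : ℂ :=
  ∑ σ : Equiv.Perm (Fin n), ∏ i, A i (σ i)

/-- The operator 2-norm of a complex square matrix. -/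
noncomputable def opNorm {n : ℕ} (A : Matrix (Fin n) (Fin n) ℂ) : ℝ :=
  ‖LinearMap.toContinuousLinearMap (Matrix.toEuclideanLin A)‖

/-- Uniform probability measure parametrizing `n` i.i.d. points of the unit circle. -/
noncomputable def circleMeasure (n : ℕ) : Measure (Fin n → ℝ) :=
  Measure.pi fun _ => volume.restrict (Set.Icc 0 1)

/-- The random vector with i.i.d. coordinates uniform on the unit circle. -/
noncomputable def Xc {n : ℕ} (θ : Fin n → ℝ) : Fin n → ℂ :=
  fun i => Complex.exp (2 * Real.pi * Complex.I * (θ i))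

/-!
`perm A` is an average over the torus: for `x` with `xⱼ = ζ^θⱼ`, `ζ` a primitive `(n+1)`-st root of
unity and `θ` uniform in `(ℤ/(n+1))ⁿ`, the average of `∏ᵢ (A x)ᵢ · x̄ᵢ` is `perm A`, because the
average of a monomial `x^c` with `|cₗ| ≤ n` vanishes unless `c = 0`. Since `‖x‖² = n` and `‖A‖ ≤ 1`,
AM-GM gives `∏ᵢ |(A x)ᵢ| ≤ 1` for every `θ`; so `|perm A| = 1` forces `|(A x)ᵢ| = 1` for all `θ`
and `i`. Averaging `|(A x)ᵢ|² · x_q x̄_p = x_q x̄_p` then gives `A i p · conj (A i q) = 0` for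
`p ≠ q`: every row has at most one non-zero entry. A non-vanishing term of `perm A` puts these
entries on a permutation, and `x = 1` shows that they have modulus one.
-/

open Finset
open scoped Matrix

theorem Finset.prod_zpow_eq_zpow_sum₀ {ι G₀ : Type*} [CommGroupWithZero G₀] {a : G₀} (ha : a ≠ 0)
    (s : Finset ι) (f : ι → ℤ) : ∏ i ∈ s, a ^ f i = a ^ ∑ i ∈ s, f i := by
  induction s using Finset.cons_induction with
  | empty => simp
  | cons i s hi ih => rw [prod_cons, sum_cons, ih, zpow_add₀ ha]

namespace IsPrimitiveRoot

variable {K : Type*} [Field K] {ζ : K} {m : ℕ}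

theorem sum_zpow_mul (hζ : IsPrimitiveRoot ζ m) (c : ℤ) :
    ∑ t : Fin m, ζ ^ (c * t) = if (m : ℤ) ∣ c then (m : K) else 0 := by
  have hpow : ∀ t : Fin m, ζ ^ (c * t) = (ζ ^ c) ^ (t : ℕ) := fun t => by
    rw [zpow_mul, zpow_natCast]
  simp_rw [hpow, Fin.sum_univ_eq_sum_range (fun t => (ζ ^ c) ^ t) m]
  split_ifs with h
  · simp [(hζ.zpow_eq_one_iff_dvd c).mpr h]
  · have hne : ζ ^ c ≠ 1 := mt (hζ.zpow_eq_one_iff_dvd c).mp h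
    have hm : (ζ ^ c) ^ m = 1 := by
      rw [← zpow_natCast, ← zpow_mul, mul_comm, zpow_mul, zpow_natCast, hζ.pow_eq_one, one_zpow]
    rw [geom_sum_eq hne, hm, sub_self, zero_div]

theorem sum_zpow_dotProduct {ι : Type*} [Fintype ι] [DecidableEq ι] (hζ : IsPrimitiveRoot ζ m)
    (c : ι → ℤ) (hc : ∀ l, |c l| < m) :
    ∑ θ : ι → Fin m, ζ ^ (c ⬝ᵥ fun l => (θ l : ℤ)) =
      if c = 0 then (m : K) ^ Fintype.card ι else 0 := by
  rcases isEmpty_or_nonempty ι with hι | ⟨⟨l⟩⟩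
  · simp [Subsingleton.elim c 0]
  have hζ0 : ζ ≠ 0 := hζ.ne_zero (by have := (abs_nonneg (c l)).trans_lt (hc l); omega)
  have hdvd : ∀ l, (m : ℤ) ∣ c l ↔ c l = 0 := fun l =>
    ⟨fun h => Int.eq_zero_of_abs_lt_dvd h (hc l), fun h => h ▸ dvd_zero _⟩
  simp_rw [dotProduct, ← prod_zpow_eq_zpow_sum₀ hζ0,
    ← Fintype.prod_sum (fun l (t : Fin m) => ζ ^ (c l * t)), hζ.sum_zpow_mul, hdvd,
    Fintype.prod_ite_zero, funext_iff]
  simp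

theorem sum_prod_zpow_comp_sub {ι : Type*} [Fintype ι] [DecidableEq ι] (hζ : IsPrimitiveRoot ζ m)
    (hm : Fintype.card ι < m) (g : ι → ι) :
    ∑ θ : ι → Fin m, ∏ i, ζ ^ ((θ (g i) : ℤ) - θ i) =
      if Function.Bijective g then (m : K) ^ Fintype.card ι else 0 := by
  set c : ι → ℤ := ∑ i, (Pi.single (g i) 1 - Pi.single i 1) with hc
  have hc_apply : ∀ l, c l = #{i | g i = l} - 1 := fun l => by
    simp [hc, Finset.sum_apply, Pi.single_apply, Finset.sum_boole, eq_comm (a := l)]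
  have hc_bound : ∀ l, |c l| < m := fun l => by
    have hcard : #{i | g i = l} ≤ Fintype.card ι := card_le_univ _
    have hpos : 0 < Fintype.card ι := Fintype.card_pos_iff.mpr ⟨l⟩
    rw [hc_apply, abs_lt]
    omega
  have hc_zero : c = 0 ↔ Function.Bijective g := by
    simp only [funext_iff, hc_apply, Pi.zero_apply, sub_eq_zero, Nat.cast_eq_one,
      Function.bijective_iff_existsUnique, card_eq_one, eq_singleton_iff_unique_mem, mem_filter,
      mem_univ, true_and, ExistsUnique]
  have hζ0 : ζ ≠ 0 := hζ.ne_zero (by omega)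
  have hprod : ∀ θ : ι → Fin m, ∏ i, ζ ^ ((θ (g i) : ℤ) - θ i) = ζ ^ (c ⬝ᵥ fun l => (θ l : ℤ)) :=
    fun θ => by simp [prod_zpow_eq_zpow_sum₀ hζ0, hc, sum_dotProduct, sub_dotProduct]
  simp_rw [hprod, hζ.sum_zpow_dotProduct c hc_bound, hc_zero]

theorem sum_zpow_sub_mul_zpow_sub {ι : Type*} [Fintype ι] [DecidableEq ι]
    (hζ : IsPrimitiveRoot ζ m) (hm : 2 < m) {p q : ι} (hpq : p ≠ q) (j k : ι) :
    ∑ θ : ι → Fin m, ζ ^ ((θ j : ℤ) - θ k) * ζ ^ ((θ q : ℤ) - θ p) =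
      if j = p ∧ k = q then (m : K) ^ Fintype.card ι else 0 := by
  set c : ι → ℤ := Pi.single j 1 - Pi.single k 1 + Pi.single q 1 - Pi.single p 1
  have hc_bound : ∀ l, |c l| < m := fun l => by
    simp only [c, Pi.sub_apply, Pi.add_apply, Pi.single_apply, abs_lt]
    split_ifs <;> omega
  have hc_zero : c = 0 ↔ j = p ∧ k = q := by
    constructor
    · intro h
      have hp := congrFun h p
      have hq := congrFun h q
      simp only [c, Pi.sub_apply, Pi.add_apply, Pi.single_apply, Pi.zero_apply] at hp hq
      grind
    · rintro ⟨rfl, rfl⟩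
      simp [c]
  have hζ0 : ζ ≠ 0 := hζ.ne_zero (by omega)
  have hchar : ∀ θ : ι → Fin m, ζ ^ ((θ j : ℤ) - θ k) * ζ ^ ((θ q : ℤ) - θ p) =
      ζ ^ (c ⬝ᵥ fun l => (θ l : ℤ)) := fun θ => by
    simp only [c, ← zpow_add₀ hζ0, sub_dotProduct, add_dotProduct, single_one_dotProduct]
    ring_nf
  simp_rw [hchar, hζ.sum_zpow_dotProduct c hc_bound, hc_zero]

end IsPrimitiveRoot

theorem sum_ite_bijective_eq_sum_perm {ι M : Type*} [Fintype ι] [DecidableEq ι] [AddCommMonoid M]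
    (F : (ι → ι) → M) :
    ∑ g : ι → ι, (if Function.Bijective g then F g else 0) = ∑ σ : Equiv.Perm ι, F σ := by
  rw [← sum_filter]
  exact (sum_nbij (fun σ : Equiv.Perm ι => ⇑σ)
    (fun σ _ => mem_filter.mpr ⟨mem_univ _, σ.bijective⟩)
    (fun _ _ _ _ h => Equiv.coe_fn_injective h)
    (fun g hg => ⟨Equiv.ofBijective g (mem_filter.mp hg).2, mem_univ _, rfl⟩) (fun _ _ => rfl)).symm

/-- A point of the discrete torus `μₘ^ι`; averaging over `θ` stands in for the uniform random point
of the circle (`Xc`), whose moments of the orders used here it reproduces exactly. -/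
def torusPoint {K ι : Type*} [DivInvMonoid K] {m : ℕ} (ζ : K) (θ : ι → Fin m) : ι → K :=
  fun j => ζ ^ (θ j : ℤ)

theorem sum_prod_mulVec_torusPoint {n : ℕ} {ζ : ℂ} (hζ : IsPrimitiveRoot ζ (n + 1))
    (A : Matrix (Fin n) (Fin n) ℂ) :
    ∑ θ : Fin n → Fin (n + 1), ∏ i, (A *ᵥ torusPoint ζ θ) i * ζ ^ (-(θ i : ℤ)) =
      ((n + 1 : ℕ) : ℂ) ^ n * perm A := by
  have hζ0 : ζ ≠ 0 := hζ.ne_zero n.succ_ne_zero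
  have hexpand : ∀ θ : Fin n → Fin (n + 1), ∏ i, (A *ᵥ torusPoint ζ θ) i * ζ ^ (-(θ i : ℤ)) =
      ∑ g : Fin n → Fin n, (∏ i, A i (g i)) * ∏ i, ζ ^ ((θ (g i) : ℤ) - θ i) := fun θ => by
    simp only [Matrix.mulVec, dotProduct, torusPoint, sum_mul]
    rw [Fintype.prod_sum]
    refine sum_congr rfl fun g _ => ?_
    rw [← prod_mul_distrib]
    refine prod_congr rfl fun i _ => ?_
    rw [sub_eq_add_neg, zpow_add₀ hζ0]
    ring
  simp_rw [hexpand]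
  rw [sum_comm]
  simp_rw [← mul_sum, hζ.sum_prod_zpow_comp_sub (ι := Fin n) (by simp), Fintype.card_fin, mul_ite,
    mul_zero, sum_ite_bijective_eq_sum_perm, ← sum_mul, perm, mul_comm]

theorem Real.prod_le_one_of_sum_le_card {ι : Type*} [Fintype ι] {z : ι → ℝ} (hz : ∀ i, 0 ≤ z i)
    (hsum : ∑ i, z i ≤ Fintype.card ι) : ∏ i, z i ≤ 1 :=
  calc ∏ i, z i ≤ ∏ i, Real.exp (z i - 1) :=
        prod_le_prod (fun i _ => hz i) fun i _ => by linarith [Real.add_one_le_exp (z i - 1)]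
    _ = Real.exp (∑ i, z i - Fintype.card ι) := by simp [← Real.exp_sum]
    _ ≤ 1 := Real.exp_le_one_iff.mpr (by linarith)

theorem Real.eq_one_of_prod_eq_one_of_sum_le_card {ι : Type*} [Fintype ι] {z : ι → ℝ}
    (hz : ∀ i, 0 ≤ z i) (hsum : ∑ i, z i ≤ Fintype.card ι) (hprod : ∏ i, z i = 1) (i : ι) :
    z i = 1 := by
  have hpos : ∀ i, 0 < z i := fun i =>
    (hz i).lt_of_ne' fun h => by simp [prod_eq_zero (mem_univ i) h] at hprod
  have hgap : ∀ i, 0 ≤ z i - 1 - Real.log (z i) := fun i => by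
    linarith [Real.log_le_sub_one_of_pos (hpos i)]
  have hsum_gap : ∑ i, (z i - 1 - Real.log (z i)) = 0 := by
    have hlog : ∑ i, Real.log (z i) = 0 := by
      rw [← Real.log_prod fun i _ => (hpos i).ne', hprod, Real.log_one]
    refine le_antisymm ?_ (sum_nonneg fun i _ => hgap i)
    simp only [sum_sub_distrib, hlog, sum_const, card_univ, nsmul_eq_mul, mul_one]
    linarith
  have hi := (sum_eq_zero_iff_of_nonneg fun i _ => hgap i).mp hsum_gap i (mem_univ i)
  by_contra hne
  linarith [Real.log_lt_sub_one_of_pos (hpos i) hne]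

theorem sum_norm_mulVec_sq_le {n : ℕ} (A : Matrix (Fin n) (Fin n) ℂ) (x : Fin n → ℂ) :
    ∑ i, ‖(A *ᵥ x) i‖ ^ 2 ≤ opNorm A ^ 2 * ∑ j, ‖x j‖ ^ 2 := by
  have h := (LinearMap.toContinuousLinearMap (Matrix.toEuclideanLin A)).le_opNorm (WithLp.toLp 2 x)
  have h' := pow_le_pow_left₀ (norm_nonneg _) h 2
  rwa [mul_pow, EuclideanSpace.norm_sq_eq, EuclideanSpace.norm_sq_eq] at h'

theorem sum_norm_mulVec_torusPoint_sq_le {n m : ℕ} {ζ : ℂ} (hζ : ‖ζ‖ = 1)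
    {A : Matrix (Fin n) (Fin n) ℂ} (hA : opNorm A ≤ 1) (θ : Fin n → Fin m) :
    ∑ i, ‖(A *ᵥ torusPoint ζ θ) i‖ ^ 2 ≤ Fintype.card (Fin n) :=
  calc ∑ i, ‖(A *ᵥ torusPoint ζ θ) i‖ ^ 2 ≤ opNorm A ^ 2 * ∑ j, ‖torusPoint ζ θ j‖ ^ 2 :=
        sum_norm_mulVec_sq_le A _
    _ ≤ 1 * Fintype.card (Fin n) := by
        simp only [torusPoint, norm_zpow, hζ, one_zpow, one_pow, sum_const, card_univ,
          nsmul_eq_mul, mul_one]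
        gcongr
        exact pow_le_one₀ (by unfold opNorm; positivity) hA
    _ = Fintype.card (Fin n) := one_mul _

theorem norm_mulVec_torusPoint_eq_one {n : ℕ} {ζ : ℂ} (hζ : IsPrimitiveRoot ζ (n + 1))
    {A : Matrix (Fin n) (Fin n) ℂ} (hA : opNorm A ≤ 1) (hperm : ‖perm A‖ = 1)
    (θ : Fin n → Fin (n + 1)) (i : Fin n) : ‖(A *ᵥ torusPoint ζ θ) i‖ = 1 := by
  have hζ1 : ‖ζ‖ = 1 := hζ.norm'_eq_one n.succ_ne_zero
  have hsq := sum_norm_mulVec_torusPoint_sq_le (m := n + 1) hζ1 hA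
  set P : (Fin n → Fin (n + 1)) → ℝ := fun θ => ∏ i, ‖(A *ᵥ torusPoint ζ θ) i‖
  have hP_sq : ∀ θ, P θ ^ 2 = ∏ i, ‖(A *ᵥ torusPoint ζ θ) i‖ ^ 2 := fun θ => (prod_pow _ _ _).symm
  have hP_le : ∀ θ, P θ ≤ 1 := fun θ =>
    (pow_le_one_iff_of_nonneg (prod_nonneg fun _ _ => norm_nonneg _) two_ne_zero).mp
      (hP_sq θ ▸ Real.prod_le_one_of_sum_le_card (fun _ => sq_nonneg _) (hsq θ))
  have hP_sum : ∑ _θ : Fin n → Fin (n + 1), (1 : ℝ) ≤ ∑ θ, P θ :=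
    calc ∑ _θ : Fin n → Fin (n + 1), (1 : ℝ)
        = ‖∑ θ : Fin n → Fin (n + 1), ∏ i, (A *ᵥ torusPoint ζ θ) i * ζ ^ (-(θ i : ℤ))‖ := by
          rw [sum_prod_mulVec_torusPoint hζ, norm_mul, hperm, norm_pow, Complex.norm_natCast]
          simp
      _ ≤ ∑ θ, P θ := by
          refine (norm_sum_le _ _).trans_eq (sum_congr rfl fun θ _ => ?_)
          simp [P, norm_prod, hζ1]
  have hP_one : P θ = 1 :=
    (sum_eq_sum_iff_of_le fun θ _ => hP_le θ).mp
      (le_antisymm (sum_le_sum fun θ _ => hP_le θ) hP_sum) θ (mem_univ θ)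
  have hi := Real.eq_one_of_prod_eq_one_of_sum_le_card (fun _ => sq_nonneg _) (hsq θ)
    (by rw [← hP_sq, hP_one, one_pow]) i
  exact (pow_eq_one_iff_of_nonneg (norm_nonneg _) two_ne_zero).mp hi

open ComplexConjugate in
theorem mul_conj_eq_zero_of_norm_dotProduct_torusPoint_eq_one {ι : Type*} [Fintype ι]
    [DecidableEq ι] {ζ : ℂ} {m : ℕ} (hζ : IsPrimitiveRoot ζ m) (hm : 2 < m) {a : ι → ℂ}
    (ha : ∀ θ : ι → Fin m, ‖a ⬝ᵥ torusPoint ζ θ‖ = 1) {p q : ι} (hpq : p ≠ q) :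
    a p * conj (a q) = 0 := by
  have hζ1 : ‖ζ‖ = 1 := hζ.norm'_eq_one (by omega)
  have hζ0 : ζ ≠ 0 := hζ.ne_zero (by omega)
  set f : (ι → Fin m) → ℂ := fun θ => a ⬝ᵥ torusPoint ζ θ
  have hnormSq : ∀ θ, f θ * conj (f θ) = ∑ j, ∑ k, a j * conj (a k) * ζ ^ ((θ j : ℤ) - θ k) :=
    fun θ => by
      simp only [f, dotProduct, torusPoint, map_sum, map_mul, map_zpow₀,
        ← Complex.inv_eq_conj hζ1, sum_mul_sum, sub_eq_add_neg, zpow_add₀ hζ0, zpow_neg, inv_zpow]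
      exact sum_congr rfl fun j _ => sum_congr rfl fun k _ => by ring
  -- `|f|² = 1` makes the average vanish, while in the expansion of `|f|²` only the `(p, q)`
  -- coefficient survives.
  have hzero : ∑ θ, f θ * conj (f θ) * ζ ^ ((θ q : ℤ) - θ p) = 0 := by
    simpa [f, Complex.mul_conj', ha, hpq] using hζ.sum_zpow_sub_mul_zpow_sub hm hpq p p
  have hcoeff : ∑ θ, f θ * conj (f θ) * ζ ^ ((θ q : ℤ) - θ p) =
      a p * conj (a q) * (m : ℂ) ^ Fintype.card ι := by
    simp_rw [hnormSq, sum_mul, mul_assoc]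
    rw [sum_comm]
    simp_rw [sum_comm (γ := ι → Fin m), ← mul_sum, hζ.sum_zpow_sub_mul_zpow_sub hm hpq, mul_ite,
      mul_zero, ite_and]
    simp
  have hm0 : (m : ℂ) ^ Fintype.card ι ≠ 0 := pow_ne_zero _ (by exact_mod_cast (by omega : m ≠ 0))
  exact (mul_eq_zero.mp (hcoeff.symm.trans hzero)).resolve_right hm0

theorem Matrix.eq_permMatrix_mul_diagonal {ι R : Type*} [Fintype ι] [DecidableEq ι] [Semiring R]
    {A : Matrix ι ι R} (σ : Equiv.Perm ι) (hA : ∀ i j, j ≠ σ i → A i j = 0) :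
    A = σ.permMatrix R * Matrix.diagonal fun j => A (σ.symm j) j := by
  ext i j
  rw [Matrix.mul_diagonal]
  by_cases hj : j = σ i
  · simp [hj, Equiv.Perm.permMatrix]
  · simp [Equiv.Perm.permMatrix, hA i j hj, Ne.symm hj]

/-- Equality case: if `|perm A| = ‖A‖₂ ^ n` and `‖A‖₂ = 1`, then A is a permutation
matrix times a unitary diagonal matrix. -/
theorem extremal_characterization {n : ℕ} (A : Matrix (Fin n) (Fin n) ℂ)
    (h1 : ‖perm A‖ = opNorm A ^ n) (h2 : opNorm A = 1) :
    ∃ (σ : Equiv.Perm (Fin n)) (d : Fin n → ℂ),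
      (∀ i, ‖d i‖ = 1) ∧ A = σ.permMatrix ℂ * Matrix.diagonal d := by
  have hζ := Complex.isPrimitiveRoot_exp (n + 1) n.succ_ne_zero
  have hperm : ‖perm A‖ = 1 := by rw [h1, h2, one_pow]
  have hrows := norm_mulVec_torusPoint_eq_one hζ h2.le hperm
  obtain ⟨σ, -, hσ⟩ := exists_ne_zero_of_sum_ne_zero (s := univ)
    (f := fun σ : Equiv.Perm (Fin n) => ∏ i, A i (σ i))
    (norm_ne_zero_iff.mp (hperm ▸ one_ne_zero))
  have hsupp : ∀ i j, j ≠ σ i → A i j = 0 := fun i j hj => by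
    have horth := mul_conj_eq_zero_of_norm_dotProduct_torusPoint_eq_one hζ
      (by have := Fin.val_ne_of_ne hj; omega) (fun θ => hrows θ i) (Ne.symm hj)
    simpa [prod_ne_zero_iff.mp hσ i (mem_univ i)] using horth
  refine ⟨σ, _, fun j => ?_, Matrix.eq_permMatrix_mul_diagonal σ hsupp⟩
  have hrow := hrows 0 (σ.symm j)
  rw [Matrix.mulVec, dotProduct, sum_eq_single j
    (fun k _ hk => by simp [hsupp (σ.symm j) k (by simpa using hk)]) (by simp)] at hrow
  simpa [torusPoint] using hrow
end

section
/- If A is an n×n matrix over ℂ with ‖A‖₂ ≤ 1 and h₂(A) = 1, then A is unitary. -/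
open MeasureTheory

/-- Average of the ℓ∞-norms of the rows of A. -/
noncomputable def hInf {n : ℕ} (A : Matrix (Fin n) (Fin n) ℂ) : ℝ :=
  (∑ i, ⨆ j, ‖A i j‖) / n

/-- Average of the ℓ₂-norms of the rows of A. -/
noncomputable def hTwo {n : ℕ} (A : Matrix (Fin n) (Fin n) ℂ) : ℝ :=
  (∑ i, Real.sqrt (∑ j, ‖A i j‖ ^ 2)) / n

/-!
For a contraction `A` the matrix `1 - A * Aᴴ` is positive semidefinite, so its diagonal entries
`1 - ‖rᵢ‖²` are nonnegative and every row has norm at most `1`. An average of numbers at most `1`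
equals `1` only if all of them do, so `h₂(A) = 1` makes the diagonal of `1 - A * Aᴴ` vanish; a
positive semidefinite matrix with zero trace is zero, hence `A * Aᴴ = 1`.
-/

open scoped Matrix ComplexOrder MatrixOrder

namespace Matrix

variable {m n : Type*} [Fintype n] {𝕜 : Type*} [RCLike 𝕜]

lemma mul_conjTranspose_apply_self (A : Matrix m n 𝕜) (i : m) :
    (A * Aᴴ) i i = ((∑ j, ‖A i j‖ ^ 2 : ℝ) : 𝕜) := by
  simp [mul_apply, RCLike.mul_conj]

lemma sum_norm_sq_row_le_one [DecidableEq n] {A : Matrix n n 𝕜} (hA : A * Aᴴ ≤ 1) (i : n) :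
    ∑ j, ‖A i j‖ ^ 2 ≤ 1 := by
  have := (le_iff.mp hA).diag_nonneg (i := i)
  rwa [sub_apply, one_apply_eq, mul_conjTranspose_apply_self, sub_nonneg, ← RCLike.ofReal_one,
    RCLike.ofReal_le_ofReal] at this

lemma eq_of_le_of_diag_eq {A B : Matrix n n 𝕜} (hle : A ≤ B) (hdiag : A.diag = B.diag) :
    A = B := by
  have htrace : (B - A).trace = 0 := by rw [trace_sub, trace, trace, hdiag, sub_self]
  exact (sub_eq_zero.mp ((le_iff.mp hle).trace_eq_zero_iff.mp htrace)).symm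

open scoped Matrix.Norms.L2Operator in
lemma mul_conjTranspose_le_one [DecidableEq n] {A : Matrix n n ℂ} (hA : ‖A‖ ≤ 1) :
    A * Aᴴ ≤ 1 :=
  calc A * Aᴴ ≤ algebraMap ℝ _ (‖A‖ ^ 2) := CStarAlgebra.mul_star_le_algebraMap_norm_sq
    _ ≤ 1 := by
      rw [← map_one (algebraMap ℝ (Matrix n n ℂ))]
      exact algebraMap_mono _ (pow_le_one₀ (norm_nonneg A) hA)

end Matrix

lemma Fintype.eq_one_of_le_one_of_sum_eq_card {ι : Type*} [Fintype ι] {f : ι → ℝ}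
    (hf : ∀ i, f i ≤ 1) (hsum : ∑ i, f i = Fintype.card ι) (i : ι) : f i = 1 :=
  (Finset.sum_eq_sum_iff_of_le (s := .univ) fun i _ => hf i).mp (by simp [hsum]) i
    (Finset.mem_univ i)

open scoped Matrix.Norms.L2Operator in
lemma opNorm_eq_l2_opNorm {n : ℕ} (A : Matrix (Fin n) (Fin n) ℂ) : opNorm A = ‖A‖ := rfl

/-- If `‖A‖₂ ≤ 1` and `h₂(A) = 1`, then A is unitary. -/
theorem hTwo_eq_one_unitary {n : ℕ} (A : Matrix (Fin n) (Fin n) ℂ)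
    (hA : opNorm A ≤ 1) (h : hTwo A = 1) :
    A ∈ Matrix.unitaryGroup (Fin n) ℂ := by
  have hle : A * Aᴴ ≤ 1 := Matrix.mul_conjTranspose_le_one (opNorm_eq_l2_opNorm A ▸ hA)
  have hrow_le (i : Fin n) : √(∑ j, ‖A i j‖ ^ 2) ≤ 1 :=
    Real.sqrt_le_one.mpr (Matrix.sum_norm_sq_row_le_one hle i)
  have hn : n ≠ 0 := by rintro rfl; simp [hTwo] at h
  have hrow (i : Fin n) : √(∑ j, ‖A i j‖ ^ 2) = 1 :=
    Fintype.eq_one_of_le_one_of_sum_eq_card hrow_le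
      (by rwa [Fintype.card_fin, ← div_eq_one_iff_eq (Nat.cast_ne_zero.mpr hn)]) i
  rw [Matrix.mem_unitaryGroup_iff, Matrix.star_eq_conjTranspose]
  refine Matrix.eq_of_le_of_diag_eq hle (funext fun i => ?_)
  rw [Matrix.diag_apply, Matrix.mul_conjTranspose_apply_self, Real.sqrt_eq_one.mp (hrow i)]
  simp
end
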